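/- arXiv:2012.04419 — 6 statements merged into one kernel-verified Lean document; each statement's English description precedes it below -/
import Mathlib

section
/- Let f : ℝ^n × ℝ^L → ℝ be jointly continuous, U ⊆ ℝ^L closed and convex with nonempty relative interior, X ⊆ ℝ^n compact, and suppose f is bounded on X × U. Define x ∈ X to be robustly optimal (RO) if it minimizes sup_{z∈U} f(x,z) over X, and Pareto robustly optimal (PRO) if it is RO and there is no RO solution x̄ with f(x̄,z) ≤ f(x,z) for all z ∈ U and strict inequality for some z ∈ U. If the set of RO solutions is nonempty, then a PRO solution exists. -/
/-- `x` is robustly optimal for `min_{x ∈ X} sup_{z ∈ U} f x z`. -/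
def IsRO {n L : ℕ} (f : (Fin n → ℝ) → (Fin L → ℝ) → ℝ)
    (X : Set (Fin n → ℝ)) (U : Set (Fin L → ℝ)) (x : Fin n → ℝ) : Prop :=
  x ∈ X ∧ ∀ x' ∈ X, (⨆ z : U, f x z) ≤ (⨆ z : U, f x' z)

/-- `x` is Pareto robustly optimal: it is RO and no RO solution weakly dominates
it on all of `U` with a strict improvement somewhere. -/
def IsPRO {n L : ℕ} (f : (Fin n → ℝ) → (Fin L → ℝ) → ℝ)
    (X : Set (Fin n → ℝ)) (U : Set (Fin L → ℝ)) (x : Fin n → ℝ) : Prop :=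
  IsRO f X U x ∧
    ¬ ∃ xbar, IsRO f X U xbar ∧ (∀ z ∈ U, f xbar z ≤ f x z) ∧
      ∃ z ∈ U, f xbar z < f x z

/-!
Instead of integrating against a strictly positive measure with a density on `U`, we use the
discrete probability measure putting mass `2⁻ᵏ⁻¹` on the `k`-th point of a dense sequence in `U`.
The weighted sum `x ↦ ∑ₖ 2⁻ᵏ f(x, zₖ)` is continuous, hence attains its minimum on the compact
set of RO solutions, and it strictly decreases along Pareto improvements: by continuity a strict
improvement somewhere on `U` is a strict improvement at some `zₖ`.
-/

open Set TopologicalSpace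

theorem norm_inv_two_pow_mul_le {a M : ℝ} (k : ℕ) (ha : |a| ≤ M) :
    ‖(2⁻¹ : ℝ) ^ k * a‖ ≤ (2⁻¹ : ℝ) ^ k * M := by
  rw [norm_mul, norm_pow, norm_inv, Real.norm_two, Real.norm_eq_abs]
  gcongr

theorem summable_inv_two_pow_mul_const (M : ℝ) : Summable fun k => (2⁻¹ : ℝ) ^ k * M :=
  (summable_geometric_of_lt_one (by norm_num) (by norm_num)).mul_right M

theorem summable_inv_two_pow_mul {a : ℕ → ℝ} {M : ℝ} (ha : ∀ k, |a k| ≤ M) :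
    Summable fun k => (2⁻¹ : ℝ) ^ k * a k :=
  (summable_inv_two_pow_mul_const M).of_norm_bounded fun k => norm_inv_two_pow_mul_le k (ha k)

theorem tsum_inv_two_pow_mul_lt_tsum {a b : ℕ → ℝ} {M : ℝ} (ha : ∀ k, |a k| ≤ M)
    (hb : ∀ k, |b k| ≤ M) (hab : a < b) :
    ∑' k, (2⁻¹ : ℝ) ^ k * a k < ∑' k, (2⁻¹ : ℝ) ^ k * b k := by
  obtain ⟨hle, k, hlt⟩ := Pi.lt_def.1 hab
  exact (summable_inv_two_pow_mul ha).tsum_lt_tsum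
    (fun i => mul_le_mul_of_nonneg_left (hle i) (by positivity))
    (mul_lt_mul_of_pos_left hlt (by positivity)) (summable_inv_two_pow_mul hb)

theorem DenseRange.exists_lt_of_lt_domRestrict {β ι : Type*} [TopologicalSpace β] {U : Set β}
    {z : ι → U} (hz : DenseRange z) {g h : β → ℝ} (hg : ContinuousOn g U)
    (hh : ContinuousOn h U) (hlt : U.domRestrict g < U.domRestrict h) :
    ∃ k, g (z k) < h (z k) := by
  obtain ⟨-, u, hu⟩ := Pi.lt_def.1 hlt
  have hopen : IsOpen {u : U | g u < h u} :=
    isOpen_lt (continuousOn_iff_continuous_domRestrict.1 hg)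
      (continuousOn_iff_continuous_domRestrict.1 hh)
  exact hz.exists_mem_open hopen ⟨u, hu⟩

theorem IsCompact.exists_forall_not_domRestrict_lt {α β : Type*} [TopologicalSpace α]
    [TopologicalSpace β] {f : α → β → ℝ} {S : Set α} {U : Set β} [SeparableSpace U]
    (hS : IsCompact S) (hSne : S.Nonempty) (hfx : ∀ z ∈ U, ContinuousOn (f · z) S)
    (hfz : ∀ x ∈ S, ContinuousOn (f x) U) {M : ℝ} (hbdd : ∀ x ∈ S, ∀ z ∈ U, |f x z| ≤ M) :
    ∃ p ∈ S, ∀ q ∈ S, ¬ U.domRestrict (f q) < U.domRestrict (f p) := by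
  rcases U.eq_empty_or_nonempty with rfl | hU
  · obtain ⟨p, hp⟩ := hSne
    exact ⟨p, hp, fun q _ hlt => hlt.ne (Subsingleton.elim _ _)⟩
  have : Nonempty U := hU.to_subtype
  obtain ⟨z, hz⟩ := exists_dense_seq U
  have hzbdd : ∀ x ∈ S, ∀ k, |f x (z k)| ≤ M := fun x hx k => hbdd x hx _ (z k).2
  have hcont : ContinuousOn (fun x => ∑' k, (2⁻¹ : ℝ) ^ k * f x (z k)) S :=
    continuousOn_tsum (fun k => continuousOn_const.mul (hfx _ (z k).2))
      (summable_inv_two_pow_mul_const M) fun k x hx => norm_inv_two_pow_mul_le k (hzbdd x hx k)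
  obtain ⟨p, hpS, hmin⟩ := hS.exists_isMinOn hSne hcont
  refine ⟨p, hpS, fun q hqS hlt => (isMinOn_iff.1 hmin q hqS).not_gt ?_⟩
  obtain ⟨k, hk⟩ := hz.exists_lt_of_lt_domRestrict (hfz q hqS) (hfz p hpS) hlt
  exact tsum_inv_two_pow_mul_lt_tsum (hzbdd q hqS) (hzbdd p hpS)
    (Pi.lt_def.2 ⟨fun i => hlt.le (z i), k, hk⟩)

section RobustOptimization

variable {n L : ℕ} {f : (Fin n → ℝ) → (Fin L → ℝ) → ℝ} {X : Set (Fin n → ℝ)}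
  {U : Set (Fin L → ℝ)}

theorem setOf_isRO_eq {x₀ : Fin n → ℝ} (hx₀ : IsRO f X U x₀) :
    {x | IsRO f X U x} = X ∩ (fun x => ⨆ z : U, f x z) ⁻¹' Iic (⨆ z : U, f x₀ z) := by
  ext x
  exact ⟨fun hx => ⟨hx.1, hx.2 x₀ hx₀.1⟩,
    fun hx => ⟨hx.1, fun x' hx' => hx.2.trans (hx₀.2 x' hx')⟩⟩

theorem isCompact_setOf_isRO (hf : Continuous fun p : (Fin n → ℝ) × (Fin L → ℝ) => f p.1 p.2)
    (hX : IsCompact X) {M : ℝ} (hbdd : ∀ x ∈ X, ∀ z ∈ U, |f x z| ≤ M) {x₀ : Fin n → ℝ}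
    (hx₀ : IsRO f X U x₀) : IsCompact {x | IsRO f X U x} := by
  have hsup : LowerSemicontinuousOn (fun x => ⨆ z : U, f x z) X :=
    lowerSemicontinuousOn_ciSup
      (fun x hx => ⟨M, forall_mem_range.2 fun z => (abs_le.1 (hbdd x hx z z.2)).2⟩)
      fun z => (hf.uncurry_right (z : Fin L → ℝ)).continuousOn.lowerSemicontinuousOn
  rw [setOf_isRO_eq hx₀]
  exact hsup.isCompact_inter_preimage_Iic hX _

end RobustOptimization

theorem stmt3_general {n L : ℕ}
    (f : (Fin n → ℝ) → (Fin L → ℝ) → ℝ)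
    (hf : Continuous fun p : (Fin n → ℝ) × (Fin L → ℝ) => f p.1 p.2)
    (U : Set (Fin L → ℝ))
    (X : Set (Fin n → ℝ)) (hX : IsCompact X)
    (M : ℝ) (hbdd : ∀ x ∈ X, ∀ z ∈ U, |f x z| ≤ M)
    (hRO : ∃ x, IsRO f X U x) :
    ∃ x, IsPRO f X U x := by
  obtain ⟨x₀, hx₀⟩ := hRO
  obtain ⟨p, hp, hpareto⟩ := (isCompact_setOf_isRO hf hX hbdd hx₀).exists_forall_not_domRestrict_lt
    ⟨x₀, hx₀⟩ (fun z _ => (hf.uncurry_right z).continuousOn)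
    (fun x _ => (hf.uncurry_left x).continuousOn)
    (fun x hx => hbdd x hx.1)
  refine ⟨p, hp, fun ⟨q, hq, hle, z, hz, hlt⟩ => hpareto q hq ?_⟩
  exact Pi.lt_def.2 ⟨fun u => hle u u.2, ⟨z, hz⟩, hlt⟩

/-- Existence of Pareto robustly optimal solutions: `f` jointly continuous,
`U` closed convex with nonempty relative interior, `X` compact, `f` bounded on
`X × U`; if an RO solution exists then a PRO solution exists. -/
theorem stmt3 {n L : ℕ}
    (f : (Fin n → ℝ) → (Fin L → ℝ) → ℝ)
    (hf : Continuous fun p : (Fin n → ℝ) × (Fin L → ℝ) => f p.1 p.2)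
    (U : Set (Fin L → ℝ)) (hUclosed : IsClosed U) (hUconv : Convex ℝ U)
    (hri : (intrinsicInterior ℝ U).Nonempty)
    (X : Set (Fin n → ℝ)) (hX : IsCompact X)
    (M : ℝ) (hbdd : ∀ x ∈ X, ∀ z ∈ U, |f x z| ≤ M)
    (hRO : ∃ x, IsRO f X U x) :
    ∃ x, IsPRO f X U x :=
  stmt3_general f hf U X hX M hbdd hRO
end

section
/- Let f : ℝ^n × ℝ^L → ℝ with f(x,·) continuous for each x, U ⊆ ℝ^L closed and convex with nonempty relative interior, and X ⊆ ℝ^n a finite set. Define RO and PRO solutions as before for the problem min_{x∈X} sup_{z∈U} f(x,z). If an RO solution exists, then a PRO solution exists. -/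
theorem stmt4_general {n L : ℕ}
    (f : (Fin n → ℝ) → (Fin L → ℝ) → ℝ)
    (U : Set (Fin L → ℝ))
    (X : Set (Fin n → ℝ)) (hX : X.Finite)
    (hRO : ∃ x, IsRO f X U x) :
    ∃ x, IsPRO f X U x := by
  have hROfin : {x | IsRO f X U x}.Finite := hX.subset fun _ hx => hx.1
  -- a PRO solution is an RO solution minimal for the pointwise order of `f x` on `U`
  obtain ⟨a, haRO, hmin⟩ := hROfin.exists_minimalFor (fun x (z : U) => f x z) _ hRO
  refine ⟨a, haRO, ?_⟩
  rintro ⟨xbar, hbarRO, hle, z, hz, hlt⟩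
  exact hlt.not_ge (hmin hbarRO (fun z => hle z z.2) ⟨z, hz⟩)

/-- Existence of Pareto robustly optimal solutions with a finite feasible set:
`f(x,·)` continuous for each `x`, `U` closed convex with nonempty relative
interior, `X` finite; if an RO solution exists then a PRO solution exists. -/
theorem stmt4 {n L : ℕ}
    (f : (Fin n → ℝ) → (Fin L → ℝ) → ℝ)
    (hf : ∀ x, Continuous (f x))
    (U : Set (Fin L → ℝ)) (hUclosed : IsClosed U) (hUconv : Convex ℝ U)
    (hri : (intrinsicInterior ℝ U).Nonempty)
    (X : Set (Fin n → ℝ)) (hX : X.Finite)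
    (hRO : ∃ x, IsRO f X U x) :
    ∃ x, IsPRO f X U x :=
  stmt4_general f U X hX hRO
end

section
/- Consider a parametric linear program min { dᵀy : B y ≤ b(z) } where b(z) ∈ ℝ^m is affine in z, and suppose the LP is feasible and bounded for all z ∈ U ⊆ ℝ^L. Then there exist finitely many sets U_1, …, U_β covering U, each of the form U_i = { z ∈ U : W_i^{-1} b(z) ≥ 0 } for an invertible matrix W_i ∈ ℝ^{m×m}, and finitely many affine maps y_i(z) such that for all z ∈ U_i, y_i(z) is an optimal solution. Consequently, the rule y(z) = y_{i*(z)}(z) with i*(z) = min{ i : z ∈ U_i } is an optimal decision rule that is piecewise linear (region-wise affine) in z. -/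
/-!
Write the problem in standard form `min c ⬝ᵥ x` subject to `A x = b z`, `x ≥ 0`, with
`A = [B, -B, I]` and `x = (y⁺, y⁻, slack)`. A basis `g` (a choice of `m` columns of `A` with
invertible `W = A_g`) is dual feasible when its reduced costs `c - (c_g W⁻¹) A` are nonnegative, a
condition not involving `z`. For such a basis and every `z` with `W⁻¹ (b z) ≥ 0`, the basic solution
is feasible, optimal by weak duality with the multipliers `c_g W⁻¹`, and linear in `b z`. So the
regions are indexed by the finitely many dual feasible bases, and what remains is that a feasible,
bounded instance always has a basis that is primal and dual feasible at once.

A feasible basis exists by a Carathéodory argument on supports. If no basic solution is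
degenerate, a cheapest feasible basis is dual feasible: a negative reduced cost yields either a
ray along which the cost is unbounded, or a pivot to a strictly cheaper feasible basis. A
degenerate right-hand side `v` is perturbed to `v + W₀ (ε, ε², …, ε^m)`, with `W₀` a feasible basis
for `v`: for small `ε > 0` the perturbed instance is nondegenerate, since each basic coordinate is a
nonzero polynomial in `ε`, and a basis that is feasible for it is feasible for `v`.
-/

open Matrix Function Set Filter Topology

namespace StandardLP

variable {m : ℕ} {ι : Type*}

lemma exists_ratio_test {κ : Type*} [Fintype κ] {x w : κ → ℝ} (hx : 0 ≤ x)
    (hw : ∃ j, w j < 0) : ∃ j, w j < 0 ∧ 0 ≤ x + (x j / -w j) • w := by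
  classical
  obtain ⟨j, hj, hmin⟩ := Finset.exists_min_image {j | w j < 0} (fun j => x j / -w j)
    (let ⟨j, hj⟩ := hw; ⟨j, by simpa using hj⟩)
  simp only [Finset.mem_filter, Finset.mem_univ, true_and] at hj hmin
  refine ⟨j, hj, fun i => ?_⟩
  have hxi : 0 ≤ x i := hx i
  simp only [Pi.zero_apply, Pi.add_apply, Pi.smul_apply, smul_eq_mul]
  rcases le_or_gt 0 (w i) with hi | hi
  · nlinarith [div_nonneg (hx j) (neg_nonneg.2 hj.le)]
  · nlinarith [(le_div_iff₀ (neg_pos.2 hi)).1 (hmin i hi)]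

def basisMatrix (A : Matrix (Fin m) ι ℝ) (g : Fin m → ι) : Matrix (Fin m) (Fin m) ℝ :=
  A.submatrix id g

def IsFeasibleBasis (A : Matrix (Fin m) ι ℝ) (v : Fin m → ℝ) (g : Fin m → ι) : Prop :=
  IsUnit (basisMatrix A g).det ∧ 0 ≤ (basisMatrix A g)⁻¹ *ᵥ v

noncomputable def reducedCost (A : Matrix (Fin m) ι ℝ) (c : ι → ℝ) (g : Fin m → ι) : ι → ℝ :=
  c - ((c ∘ g) ᵥ* (basisMatrix A g)⁻¹) ᵥ* A

def IsDualFeasibleBasis (A : Matrix (Fin m) ι ℝ) (c : ι → ℝ) (g : Fin m → ι) : Prop :=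
  IsUnit (basisMatrix A g).det ∧ 0 ≤ reducedCost A c g

section Basis

variable {A : Matrix (Fin m) ι ℝ} {g : Fin m → ι}

lemma injective_of_isUnit_det (hg : IsUnit (basisMatrix A g).det) : Injective g :=
  fun k l hkl => by_contra fun hne => hg.ne_zero (det_zero_of_column_eq hne fun i => by
    simp [basisMatrix, hkl])

lemma exists_isUnit_det_basisMatrix_superset (hspan : Submodule.span ℝ (range A.col) = ⊤)
    {s : Set ι} (hs : LinearIndepOn ℝ A.col s) :
    ∃ g : Fin m → ι, IsUnit (basisMatrix A g).det ∧ s ⊆ range g := by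
  obtain ⟨r, -, hsr, hspan_r, hr⟩ := exists_linearIndepOn_extension hs (subset_univ s)
  have hr_top : ⊤ ≤ Submodule.span ℝ (range fun j : r => A.col j) := by
    rw [← hspan, ← image_univ, ← image_eq_range]
    exact Submodule.span_le.2 hspan_r
  let e := (Pi.basisFun ℝ (Fin m)).indexEquiv (Module.Basis.mk hr hr_top)
  refine ⟨fun k => e k, ?_, fun j hj => ⟨e.symm ⟨j, hsr hj⟩, by simp⟩⟩
  rw [← isUnit_iff_isUnit_det, ← linearIndependent_cols_iff_isUnit]
  exact hr.comp e e.injective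

lemma basisMatrix_update (g : Fin m → ι) (k : Fin m) (j : ι) :
    basisMatrix A (update g k j) = (basisMatrix A g).updateCol k (A.col j) := by
  ext i l
  by_cases hl : l = k
  · subst hl
    simp [basisMatrix]
  · simp [basisMatrix, hl]

lemma isUnit_det_basisMatrix_update (hg : IsUnit (basisMatrix A g).det) {k : Fin m} {j : ι}
    (hk : ((basisMatrix A g)⁻¹ *ᵥ A.col j) k ≠ 0) :
    IsUnit (basisMatrix A (update g k j)).det := by
  set W := basisMatrix A g
  have hcol : W *ᵥ (W⁻¹ *ᵥ A.col j) = A.col j := by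
    rw [mulVec_mulVec, mul_nonsing_inv _ hg, one_mulVec]
  have hW : basisMatrix A (update g k j) = W * (1 : Matrix _ _ ℝ).updateCol k (W⁻¹ *ᵥ A.col j) := by
    rw [basisMatrix_update, mul_updateCol, mul_one, hcol]
  rw [hW, det_mul, ← cramer_apply, cramer_one]
  exact hg.mul (isUnit_iff_ne_zero.2 hk)

lemma support_subset_range_update {x : ι → ℝ} {k : Fin m} {j : ι}
    (hx : support x ⊆ insert j (range g)) (hxk : x (g k) = 0) :
    support x ⊆ range (update g k j) := by
  intro i hi
  rcases hx hi with rfl | ⟨l, rfl⟩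
  · exact ⟨k, update_self _ _ _⟩
  · have hlk : l ≠ k := by
      rintro rfl
      exact hi hxk
    exact ⟨l, update_of_ne hlk _ _⟩

end Basis

section Selection

variable [DecidableEq ι] {g : Fin m → ι}

def selection (g : Fin m → ι) : Matrix ι (Fin m) ℝ :=
  (1 : Matrix ι ι ℝ).submatrix id g

lemma selection_mulVec_apply (hg : Injective g) (w : Fin m → ℝ) (k : Fin m) :
    (selection g *ᵥ w) (g k) = w k := by
  simp [selection, mulVec, dotProduct, one_apply, hg.eq_iff]

lemma support_selection_mulVec_subset (w : Fin m → ℝ) :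
    support (selection g *ᵥ w) ⊆ range g := by
  intro j hj
  by_contra hjg
  apply hj
  simp only [mulVec, dotProduct]
  refine Finset.sum_eq_zero fun k _ => ?_
  have : j ≠ g k := fun h => hjg ⟨k, h.symm⟩
  simp [selection, one_apply, this]

lemma selection_mulVec_nonneg {w : Fin m → ℝ} (hw : 0 ≤ w) : 0 ≤ selection g *ᵥ w := by
  intro j
  simp only [Pi.zero_apply, selection, mulVec, dotProduct, submatrix_apply, id, one_apply]
  exact Finset.sum_nonneg fun k _ => mul_nonneg (by split_ifs <;> norm_num) (hw k)

lemma selection_mulVec_comp (hg : Injective g) {x : ι → ℝ} (hx : support x ⊆ range g) :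
    selection g *ᵥ (x ∘ g) = x := by
  ext j
  by_cases hj : j ∈ range g
  · obtain ⟨k, rfl⟩ := hj
    exact selection_mulVec_apply hg _ k
  · rw [notMem_support.1 fun h => hj (support_selection_mulVec_subset _ h),
      notMem_support.1 fun h => hj (hx h)]

variable {A : Matrix (Fin m) ι ℝ} {v : Fin m → ℝ}

noncomputable def basicSolution (A : Matrix (Fin m) ι ℝ) (v : Fin m → ℝ) (g : Fin m → ι) :
    ι → ℝ :=
  selection g *ᵥ ((basisMatrix A g)⁻¹ *ᵥ v)

lemma basicSolution_comp (hg : IsUnit (basisMatrix A g).det) :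
    basicSolution A v g ∘ g = (basisMatrix A g)⁻¹ *ᵥ v :=
  funext (selection_mulVec_apply (injective_of_isUnit_det hg) _)

noncomputable def edgeDirection (A : Matrix (Fin m) ι ℝ) (g : Fin m → ι) (j : ι) : ι → ℝ :=
  Pi.single j 1 - selection g *ᵥ ((basisMatrix A g)⁻¹ *ᵥ A.col j)

lemma edgeDirection_apply (hg : Injective g) {j : ι} (hj : j ∉ range g) (k : Fin m) :
    edgeDirection A g j (g k) = -((basisMatrix A g)⁻¹ *ᵥ A.col j) k := by
  rw [edgeDirection, Pi.sub_apply, selection_mulVec_apply hg,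
    Pi.single_eq_of_ne (fun h => hj ⟨k, h⟩), zero_sub]

lemma edgeDirection_nonneg_of_notMem_range {j j' : ι} (hj' : j' ∉ range g) :
    0 ≤ edgeDirection A g j j' := by
  rw [edgeDirection, Pi.sub_apply,
    notMem_support.1 fun h => hj' (support_selection_mulVec_subset _ h), sub_zero]
  by_cases h : j' = j <;> simp [h]

lemma support_edgeDirection_subset (j : ι) :
    support (edgeDirection A g j) ⊆ insert j (range g) :=
  (support_sub _ _).trans (union_subset
    (Pi.support_single_subset.trans (singleton_subset_iff.2 (mem_insert _ _)))
    ((support_selection_mulVec_subset _).trans (subset_insert _ _)))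

variable [Fintype ι]

lemma mul_selection (A : Matrix (Fin m) ι ℝ) (g : Fin m → ι) :
    A * selection g = basisMatrix A g :=
  mul_submatrix_one (Equiv.refl ι) g A

lemma vecMul_selection (c : ι → ℝ) (g : Fin m → ι) : c ᵥ* selection g = c ∘ g := by
  ext k
  simp [selection, vecMul, dotProduct, one_apply]

end Selection

section Feasibility

variable [Fintype ι] {A : Matrix (Fin m) ι ℝ} {c : ι → ℝ} {v : Fin m → ℝ}

def IsFeasible (A : Matrix (Fin m) ι ℝ) (v : Fin m → ℝ) (x : ι → ℝ) : Prop :=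
  0 ≤ x ∧ A *ᵥ x = v

lemma dotProduct_le_of_vecMul_le {u : Fin m → ℝ} (hu : u ᵥ* A ≤ c) {x : ι → ℝ}
    (hx : IsFeasible A v x) : u ⬝ᵥ v ≤ c ⬝ᵥ x := by
  rw [← hx.2, dotProduct_mulVec]
  exact dotProduct_le_dotProduct_of_nonneg_right hu hx.1

lemma dotProduct_nonneg_of_bddBelow {x : ι → ℝ} (hx : IsFeasible A v x)
    (hbdd : BddBelow ((c ⬝ᵥ ·) '' {x | IsFeasible A v x})) {w : ι → ℝ} (hw : 0 ≤ w)
    (hAw : A *ᵥ w = 0) : 0 ≤ c ⬝ᵥ w := by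
  obtain ⟨lb, hlb⟩ := hbdd
  by_contra! hneg
  set t := (c ⬝ᵥ x - lb + 1) / -(c ⬝ᵥ w)
  have ht : 0 ≤ t := div_nonneg (by linarith [hlb ⟨x, hx, rfl⟩]) (by linarith)
  have htw : t * (c ⬝ᵥ w) = -(c ⬝ᵥ x - lb + 1) := by
    simp only [t]
    field_simp [hneg.ne]
  have hfeas : IsFeasible A v (x + t • w) := ⟨add_nonneg hx.1 (smul_nonneg ht hw), by
    rw [mulVec_add, mulVec_smul, hAw, smul_zero, add_zero, hx.2]⟩
  have := hlb ⟨_, hfeas, rfl⟩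
  simp only [dotProduct_add, dotProduct_smul, smul_eq_mul, htw] at this
  linarith

lemma mulVec_eq_linearCombination_col (l : ι →₀ ℝ) :
    A *ᵥ ⇑l = Finsupp.linearCombination ℝ A.col l := by
  ext i
  simp [Finsupp.linearCombination_apply, Finsupp.sum_fintype, mulVec, dotProduct, mul_comm]

lemma exists_isFeasible_support_ssubset {x : ι → ℝ} (hx : IsFeasible A v x)
    (hdep : ¬ LinearIndepOn ℝ A.col (support x)) :
    ∃ x', IsFeasible A v x' ∧ support x' ⊂ support x := by
  obtain ⟨w, hAw, hwx, hw⟩ : ∃ w, A *ᵥ w = 0 ∧ support w ⊆ support x ∧ ∃ j, w j < 0 := by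
    rw [linearIndepOn_iff] at hdep
    push Not at hdep
    obtain ⟨l, hl, hAl, hl0⟩ := hdep
    rw [← mulVec_eq_linearCombination_col] at hAl
    rw [Finsupp.mem_supported, ← Finsupp.fun_support_eq] at hl
    obtain ⟨j, hj⟩ : ∃ j, l j ≠ 0 := by
      by_contra! h
      exact hl0 (Finsupp.ext h)
    rcases hj.lt_or_gt with h | h
    · exact ⟨⇑l, hAl, hl, j, h⟩
    · exact ⟨-⇑l, by rw [mulVec_neg, hAl, neg_zero], by rwa [support_neg], j, by simpa using h⟩
  obtain ⟨j, hj, hx'⟩ := exists_ratio_test hx.1 hw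
  refine ⟨x + (x j / -w j) • w, ⟨hx', ?_⟩, ?_, fun h => ?_⟩
  · rw [mulVec_add, mulVec_smul, hAw, hx.2, smul_zero, add_zero]
  · exact (support_add _ _).trans (union_subset le_rfl ((support_smul_subset_right _ _).trans hwx))
  · apply h (hwx hj.ne)
    simp only [Pi.add_apply, Pi.smul_apply, smul_eq_mul]
    field_simp [hj.ne]
    ring

variable [DecidableEq ι] {g : Fin m → ι}

lemma mulVec_basicSolution (hg : IsUnit (basisMatrix A g).det) :
    A *ᵥ basicSolution A v g = v := by
  rw [basicSolution, mulVec_mulVec, mul_selection, mulVec_mulVec, mul_nonsing_inv _ hg,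
    one_mulVec]

lemma IsFeasibleBasis.isFeasible (hg : IsFeasibleBasis A v g) :
    IsFeasible A v (basicSolution A v g) :=
  ⟨selection_mulVec_nonneg hg.2, mulVec_basicSolution hg.1⟩

lemma eq_basicSolution (hg : IsUnit (basisMatrix A g).det) {x : ι → ℝ} (hx : A *ᵥ x = v)
    (hsupp : support x ⊆ range g) : x = basicSolution A v g := by
  have hxg := selection_mulVec_comp (injective_of_isUnit_det hg) hsupp
  have hW : basisMatrix A g *ᵥ (x ∘ g) = v := by
    rw [← mul_selection, ← mulVec_mulVec, hxg, hx]
  rw [basicSolution, ← hW, mulVec_mulVec _ (basisMatrix A g)⁻¹, nonsing_inv_mul _ hg,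
    one_mulVec, hxg]

lemma isFeasibleBasis_of_support_subset (hg : IsUnit (basisMatrix A g).det) {x : ι → ℝ}
    (hx : IsFeasible A v x) (hsupp : support x ⊆ range g) : IsFeasibleBasis A v g := by
  refine ⟨hg, ?_⟩
  rw [← basicSolution_comp hg, ← eq_basicSolution hg hx.2 hsupp]
  exact fun k => hx.1 (g k)

theorem exists_isFeasibleBasis (hspan : Submodule.span ℝ (range A.col) = ⊤) {x : ι → ℝ}
    (hx : IsFeasible A v x) : ∃ g, IsFeasibleBasis A v g := by
  obtain ⟨x, hx, hmin⟩ := (measure fun x : ι → ℝ => (support x).ncard).wf.has_min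
    {x | IsFeasible A v x} ⟨x, hx⟩
  have hli : LinearIndepOn ℝ A.col (support x) := by
    by_contra hdep
    obtain ⟨x', hx', hlt⟩ := exists_isFeasible_support_ssubset hx hdep
    exact hmin x' hx' (ncard_lt_ncard hlt (toFinite _))
  obtain ⟨g, hg, hsupp⟩ := exists_isUnit_det_basisMatrix_superset hspan hli
  exact ⟨g, isFeasibleBasis_of_support_subset hg hx hsupp⟩

lemma dotProduct_basicSolution :
    c ⬝ᵥ basicSolution A v g = ((c ∘ g) ᵥ* (basisMatrix A g)⁻¹) ⬝ᵥ v := by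
  rw [basicSolution, dotProduct_mulVec, vecMul_selection, dotProduct_mulVec]

lemma IsDualFeasibleBasis.dotProduct_basicSolution_le (hg : IsDualFeasibleBasis A c g)
    {x : ι → ℝ} (hx : IsFeasible A v x) : c ⬝ᵥ basicSolution A v g ≤ c ⬝ᵥ x := by
  rw [dotProduct_basicSolution]
  exact dotProduct_le_of_vecMul_le (sub_nonneg.1 hg.2) hx

lemma reducedCost_comp (hg : IsUnit (basisMatrix A g).det) : reducedCost A c g ∘ g = 0 := by
  set u := (c ∘ g) ᵥ* (basisMatrix A g)⁻¹
  have hu : (u ᵥ* A) ∘ g = c ∘ g := by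
    rw [← vecMul_selection, vecMul_vecMul, mul_selection, vecMul_vecMul, nonsing_inv_mul _ hg,
      vecMul_one]
  ext k
  show c (g k) - (u ᵥ* A) (g k) = 0
  rw [show (u ᵥ* A) (g k) = c (g k) from congrFun hu k, sub_self]

lemma mulVec_edgeDirection (hg : IsUnit (basisMatrix A g).det) (j : ι) :
    A *ᵥ edgeDirection A g j = 0 := by
  rw [edgeDirection, mulVec_sub, mulVec_mulVec, mul_selection, mulVec_mulVec,
    mul_nonsing_inv _ hg, one_mulVec, mulVec_single_one, sub_self]

lemma dotProduct_edgeDirection (j : ι) : c ⬝ᵥ edgeDirection A g j = reducedCost A c g j := by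
  rw [edgeDirection, dotProduct_sub, dotProduct_mulVec, vecMul_selection, dotProduct_mulVec,
    dotProduct_single_one, reducedCost, Pi.sub_apply]
  rfl

lemma exists_cheaper_isFeasibleBasis (hrec : ∀ w, 0 ≤ w → A *ᵥ w = 0 → 0 ≤ c ⬝ᵥ w)
    (hg : IsUnit (basisMatrix A g).det) (hpos : ∀ k, 0 < ((basisMatrix A g)⁻¹ *ᵥ v) k) {j : ι}
    (hj : reducedCost A c g j < 0) :
    ∃ g', IsFeasibleBasis A v g' ∧ c ⬝ᵥ basicSolution A v g' < c ⬝ᵥ basicSolution A v g := by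
  set x := basicSolution A v g
  set w := edgeDirection A g j
  have hjg : j ∉ range g := by
    rintro ⟨k, rfl⟩
    exact hj.ne (congrFun (reducedCost_comp hg) k)
  obtain ⟨j₁, hwj₁, hx'⟩ : ∃ j₁, w j₁ < 0 ∧ 0 ≤ x + (x j₁ / -w j₁) • w := by
    refine exists_ratio_test (selection_mulVec_nonneg fun k => (hpos k).le) ?_
    by_contra! hw
    have := hrec w hw (mulVec_edgeDirection hg j)
    rw [dotProduct_edgeDirection] at this
    linarith
  obtain ⟨k, rfl⟩ : j₁ ∈ range g := by
    by_contra h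
    exact (edgeDirection_nonneg_of_notMem_range h).not_gt hwj₁
  set t := x (g k) / -w (g k)
  have hxk : x (g k) = ((basisMatrix A g)⁻¹ *ᵥ v) k := congrFun (basicSolution_comp hg) k
  have ht : 0 < t := div_pos (hxk ▸ hpos k) (neg_pos.2 hwj₁)
  have hAx' : A *ᵥ (x + t • w) = v := by
    rw [mulVec_add, mulVec_smul, mulVec_edgeDirection hg, mulVec_basicSolution hg, smul_zero,
      add_zero]
  have hsupp : support (x + t • w) ⊆ range (update g k j) := by
    refine support_subset_range_update ((support_add _ _).trans (union_subset ?_ ?_)) ?_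
    · exact (support_selection_mulVec_subset _).trans (subset_insert _ _)
    · exact (support_smul_subset_right _ _).trans (support_edgeDirection_subset j)
    · simp only [Pi.add_apply, Pi.smul_apply, smul_eq_mul, t]
      field_simp [hwj₁.ne]
      ring
  have hg' : IsUnit (basisMatrix A (update g k j)).det := by
    refine isUnit_det_basisMatrix_update hg fun h0 => hwj₁.ne ?_
    rw [show w (g k) = _ from edgeDirection_apply (injective_of_isUnit_det hg) hjg k, h0,
      neg_zero]
  refine ⟨update g k j, isFeasibleBasis_of_support_subset hg' ⟨hx', hAx'⟩ hsupp, ?_⟩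
  rw [← eq_basicSolution hg' hAx' hsupp, dotProduct_add, dotProduct_smul, smul_eq_mul,
    dotProduct_edgeDirection]
  linarith [mul_neg_of_pos_of_neg ht hj]

theorem exists_isDualFeasibleBasis_of_nondegenerate
    (hrec : ∀ w, 0 ≤ w → A *ᵥ w = 0 → 0 ≤ c ⬝ᵥ w)
    (hnd : ∀ g, IsUnit (basisMatrix A g).det → ∀ k, ((basisMatrix A g)⁻¹ *ᵥ v) k ≠ 0)
    (h₀ : ∃ g, IsFeasibleBasis A v g) :
    ∃ g, IsDualFeasibleBasis A c g ∧ IsFeasibleBasis A v g := by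
  obtain ⟨g, hg, hmin⟩ := exists_min_image {g | IsFeasibleBasis A v g}
    (fun g => c ⬝ᵥ basicSolution A v g) (toFinite _) h₀
  refine ⟨g, ⟨hg.1, fun j => not_lt.1 fun hj => ?_⟩, hg⟩
  obtain ⟨g', hg', hlt⟩ := exists_cheaper_isFeasibleBasis hrec hg.1
    (fun k => (hg.2 k).lt_of_ne (hnd g hg.1 k).symm) hj
  exact (hmin g' hg').not_gt hlt

end Feasibility

section Perturbation

def powers (ε : ℝ) : Fin m → ℝ := fun k => ε ^ (k + 1 : ℕ)

lemma exists_ne_zero_of_isUnit_det {M : Matrix (Fin m) (Fin m) ℝ} (hM : IsUnit M.det)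
    (k : Fin m) : ∃ l, M k l ≠ 0 := by
  by_contra! h
  exact hM.ne_zero (det_eq_zero_of_row_eq_zero k h)

open Polynomial in
lemma eventually_add_mulVec_powers_ne_zero {M : Matrix (Fin m) (Fin m) ℝ} (hM : IsUnit M.det)
    (a : Fin m → ℝ) (k : Fin m) : ∀ᶠ ε in 𝓝[>] 0, (a + M *ᵥ powers ε) k ≠ 0 := by
  set p : ℝ[X] := C (a k) + ∑ l, C (M k l) * X ^ (l + 1 : ℕ)
  have hp : p ≠ 0 := by
    obtain ⟨l, hl⟩ := exists_ne_zero_of_isUnit_det hM k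
    intro h
    apply hl
    simpa [p, coeff_X_pow, Fin.val_inj] using congrArg (coeff · (l + 1 : ℕ)) h
  have heval : ∀ ε, p.eval ε = (a + M *ᵥ powers ε) k := fun ε => by
    simp [p, eval_finsetSum, mulVec, dotProduct, powers]
  filter_upwards [((nhdsGT_le_nhdsNE 0).trans (nhdsNE_le_cofinite 0))
    (finite_setOfPred_isRoot hp).eventually_cofinite_notMem] with ε hε
  rwa [← heval]

lemma eventually_add_mulVec_powers_neg (M : Matrix (Fin m) (Fin m) ℝ) {a : Fin m → ℝ}
    {k : Fin m} (ha : a k < 0) : ∀ᶠ ε in 𝓝[>] 0, (a + M *ᵥ powers ε) k < 0 := by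
  have hcont : Continuous fun ε : ℝ => (a + M *ᵥ powers ε) k := by
    unfold powers
    fun_prop
  have hzero : powers (m := m) 0 = 0 := funext fun k => zero_pow (Nat.succ_ne_zero _)
  refine nhdsWithin_le_nhds ((hcont.tendsto' 0 (a k) ?_).eventually_lt_const ha)
  simp [hzero]

end Perturbation

theorem exists_isDualFeasibleBasis [Fintype ι] [DecidableEq ι] {A : Matrix (Fin m) ι ℝ}
    {c : ι → ℝ} {v : Fin m → ℝ} (hspan : Submodule.span ℝ (range A.col) = ⊤) {x : ι → ℝ}
    (hx : IsFeasible A v x) (hbdd : BddBelow ((c ⬝ᵥ ·) '' {x | IsFeasible A v x})) :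
    ∃ g, IsDualFeasibleBasis A c g ∧ IsFeasibleBasis A v g := by
  obtain ⟨g₀, hg₀⟩ := exists_isFeasibleBasis hspan hx
  set W₀ := basisMatrix A g₀
  have hcoord : ∀ g ε, (basisMatrix A g)⁻¹ *ᵥ (v + W₀ *ᵥ powers ε) =
      (basisMatrix A g)⁻¹ *ᵥ v + ((basisMatrix A g)⁻¹ * W₀) *ᵥ powers ε := fun g ε => by
    rw [mulVec_add, mulVec_mulVec]
  have hev : ∀ᶠ ε in 𝓝[>] 0, 0 < ε ∧ ∀ g k,
      (IsUnit (basisMatrix A g).det → ((basisMatrix A g)⁻¹ *ᵥ (v + W₀ *ᵥ powers ε)) k ≠ 0) ∧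
      (((basisMatrix A g)⁻¹ *ᵥ v) k < 0 →
        ((basisMatrix A g)⁻¹ *ᵥ (v + W₀ *ᵥ powers ε)) k < 0) := by
    refine eventually_mem_nhdsWithin.and (eventually_all.2 fun g => eventually_all.2 fun k => ?_)
    simp only [hcoord]
    refine (eventually_imp_distrib_left.2 fun hg => ?_).and
      (eventually_imp_distrib_left.2 fun hk => eventually_add_mulVec_powers_neg _ hk)
    refine eventually_add_mulVec_powers_ne_zero ?_ _ k
    rw [det_mul]
    exact (isUnit_nonsing_inv_det _ hg).mul hg₀.1
  obtain ⟨ε, hε, hgood⟩ := hev.exists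
  have hg₀ε : IsFeasibleBasis A (v + W₀ *ᵥ powers ε) g₀ := by
    refine ⟨hg₀.1, ?_⟩
    rw [hcoord, nonsing_inv_mul _ hg₀.1, one_mulVec]
    exact add_nonneg hg₀.2 fun k => pow_nonneg hε.le _
  obtain ⟨g, hdual, -, hfeas⟩ := exists_isDualFeasibleBasis_of_nondegenerate
    (fun w hw hAw => dotProduct_nonneg_of_bddBelow hx hbdd hw hAw)
    (fun g hg k => (hgood g k).1 hg) ⟨g₀, hg₀ε⟩
  exact ⟨g, hdual, hdual.1, fun k => not_lt.1 fun hk => ((hgood g k).2 hk).not_ge (hfeas k)⟩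
section InequalityForm

variable {ny : ℕ} (B : Matrix (Fin m) (Fin ny) ℝ)

def stdMatrix : Matrix (Fin m) ((Fin ny ⊕ Fin ny) ⊕ Fin m) ℝ := fromCols (fromCols B (-B)) 1

def decisionMatrix (ny m : ℕ) : Matrix (Fin ny) ((Fin ny ⊕ Fin ny) ⊕ Fin m) ℝ :=
  fromCols (fromCols 1 (-1)) 0

def stdPoint (y : Fin ny → ℝ) (s : Fin m → ℝ) : (Fin ny ⊕ Fin ny) ⊕ Fin m → ℝ :=
  Sum.elim (Sum.elim y⁺ y⁻) s

variable {B}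

lemma stdMatrix_mulVec (x : (Fin ny ⊕ Fin ny) ⊕ Fin m → ℝ) :
    stdMatrix B *ᵥ x = B *ᵥ (decisionMatrix ny m *ᵥ x) + x ∘ Sum.inr := by
  simp [stdMatrix, decisionMatrix, fromCols_mulVec, mulVec_add]

lemma decisionMatrix_mulVec_stdPoint (y : Fin ny → ℝ) (s : Fin m → ℝ) :
    decisionMatrix ny m *ᵥ stdPoint y s = y := by
  simp [decisionMatrix, stdPoint, fromCols_mulVec, neg_mulVec, ← sub_eq_add_neg]

lemma isFeasible_stdPoint {v : Fin m → ℝ} {y : Fin ny → ℝ} (hy : B *ᵥ y ≤ v) :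
    IsFeasible (stdMatrix B) v (stdPoint y (v - B *ᵥ y)) := by
  refine ⟨?_, ?_⟩
  · rintro ((p | p) | k)
    exacts [posPart_nonneg y p, negPart_nonneg y p, sub_nonneg.2 (hy k)]
  · rw [stdMatrix_mulVec, decisionMatrix_mulVec_stdPoint]
    exact add_sub_cancel _ _

lemma IsFeasible.mulVec_decisionMatrix_le {v : Fin m → ℝ} {x : (Fin ny ⊕ Fin ny) ⊕ Fin m → ℝ}
    (hx : IsFeasible (stdMatrix B) v x) : B *ᵥ (decisionMatrix ny m *ᵥ x) ≤ v := by
  rw [← hx.2, stdMatrix_mulVec]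
  exact le_add_of_nonneg_right fun k => hx.1 (Sum.inr k)

lemma span_col_stdMatrix : Submodule.span ℝ (range (stdMatrix B).col) = ⊤ := by
  refine eq_top_iff.2 ((Pi.basisFun ℝ (Fin m)).span_eq.symm.le.trans (Submodule.span_mono ?_))
  rintro _ ⟨k, rfl⟩
  exact ⟨Sum.inr k, by ext i; simp [stdMatrix, col, one_apply, Pi.single_apply, eq_comm]⟩

theorem exists_isDualFeasibleBasis_stdMatrix {d : Fin ny → ℝ} {v : Fin m → ℝ}
    (hfeas : ∃ y, B *ᵥ y ≤ v) (hbdd : BddBelow ((d ⬝ᵥ ·) '' {y | B *ᵥ y ≤ v})) :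
    ∃ g, IsDualFeasibleBasis (stdMatrix B) (d ᵥ* decisionMatrix ny m) g ∧
      0 ≤ (basisMatrix (stdMatrix B) g)⁻¹ *ᵥ v := by
  obtain ⟨y, hy⟩ := hfeas
  obtain ⟨lb, hlb⟩ := hbdd
  refine (exists_isDualFeasibleBasis span_col_stdMatrix (isFeasible_stdPoint hy)
    ⟨lb, ?_⟩).imp fun g hg => ⟨hg.1, hg.2.2⟩
  rintro _ ⟨x, hx, rfl⟩
  show lb ≤ (d ᵥ* decisionMatrix ny m) ⬝ᵥ x
  rw [← dotProduct_mulVec]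
  exact hlb ⟨_, hx.mulVec_decisionMatrix_le, rfl⟩

lemma IsDualFeasibleBasis.isOptimal_stdMatrix {d : Fin ny → ℝ} {v : Fin m → ℝ}
    {g : Fin m → (Fin ny ⊕ Fin ny) ⊕ Fin m}
    (hg : IsDualFeasibleBasis (stdMatrix B) (d ᵥ* decisionMatrix ny m) g)
    (hv : 0 ≤ (basisMatrix (stdMatrix B) g)⁻¹ *ᵥ v) :
    B *ᵥ (decisionMatrix ny m *ᵥ basicSolution (stdMatrix B) v g) ≤ v ∧
      ∀ y, B *ᵥ y ≤ v → d ⬝ᵥ (decisionMatrix ny m *ᵥ basicSolution (stdMatrix B) v g) ≤ d ⬝ᵥ y := by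
  have hx := IsFeasibleBasis.isFeasible ⟨hg.1, hv⟩
  refine ⟨hx.mulVec_decisionMatrix_le, fun y hy => ?_⟩
  have := hg.dotProduct_basicSolution_le (isFeasible_stdPoint hy)
  rwa [← dotProduct_mulVec, ← dotProduct_mulVec, decisionMatrix_mulVec_stdPoint] at this

end InequalityForm

end StandardLP

open StandardLP

/-- Parametric LP `min dᵀy  s.t.  B y ≤ b(z)` with `b` affine in `z`, feasible
and bounded for all `z ∈ U`.  There exist finitely many regions
`U_i = {z ∈ U : W_i⁻¹ b(z) ≥ 0}` (with `W_i` invertible) covering `U`, and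
affine maps `y_i` optimal on each region; consequently there is an optimal
decision rule which on each `z` agrees with one of the affine maps (a
piecewise linear / region-wise affine rule). -/
theorem stmt8 {m ny L : ℕ}
    (B : Matrix (Fin m) (Fin ny) ℝ) (d : Fin ny → ℝ)
    (b : (Fin L → ℝ) →ᵃ[ℝ] (Fin m → ℝ))
    (U : Set (Fin L → ℝ))
    (hfeas : ∀ z ∈ U, ∃ y : Fin ny → ℝ, ∀ i, B.mulVec y i ≤ b z i)
    (hbdd : ∀ z ∈ U, ∃ lb : ℝ, ∀ y : Fin ny → ℝ,
      (∀ i, B.mulVec y i ≤ b z i) → lb ≤ d ⬝ᵥ y) :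
    ∃ (β : ℕ) (W : Fin β → Matrix (Fin m) (Fin m) ℝ)
      (y : Fin β → ((Fin L → ℝ) →ᵃ[ℝ] (Fin ny → ℝ))),
      (∀ i, IsUnit (W i).det) ∧
      -- the regions cover U
      (∀ z ∈ U, ∃ i, ∀ k, 0 ≤ (W i)⁻¹.mulVec (b z) k) ∧
      -- on each region the corresponding affine map is optimal
      (∀ i, ∀ z ∈ U, (∀ k, 0 ≤ (W i)⁻¹.mulVec (b z) k) →
        (∀ k, B.mulVec (y i z) k ≤ b z k) ∧
        ∀ y' : Fin ny → ℝ, (∀ k, B.mulVec y' k ≤ b z k) → d ⬝ᵥ (y i z) ≤ d ⬝ᵥ y') ∧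
      -- the resulting piecewise linear rule is optimal for every z ∈ U
      ∃ yrule : (Fin L → ℝ) → (Fin ny → ℝ),
        ∀ z ∈ U, (∃ i, (∀ k, 0 ≤ (W i)⁻¹.mulVec (b z) k) ∧ yrule z = y i z) ∧
          (∀ k, B.mulVec (yrule z) k ≤ b z k) ∧
          ∀ y' : Fin ny → ℝ, (∀ k, B.mulVec y' k ≤ b z k) → d ⬝ᵥ (yrule z) ≤ d ⬝ᵥ y' := by
  classical
  let e := Fintype.equivFin {g // IsDualFeasibleBasis (stdMatrix B) (d ᵥ* decisionMatrix ny m) g}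
  let g i := (e.symm i).1
  let W i := basisMatrix (stdMatrix B) (g i)
  let y i : (Fin L → ℝ) →ᵃ[ℝ] (Fin ny → ℝ) :=
    (mulVecLin (decisionMatrix ny m * selection (g i) * (W i)⁻¹)).toAffineMap.comp b
  have hopt i z (hz : 0 ≤ (W i)⁻¹ *ᵥ b z) :
      B *ᵥ y i z ≤ b z ∧ ∀ y', B *ᵥ y' ≤ b z → d ⬝ᵥ y i z ≤ d ⬝ᵥ y' := by
    have hy : y i z = decisionMatrix ny m *ᵥ basicSolution (stdMatrix B) (b z) (g i) := by
      simp [y, W, basicSolution, mulVec_mulVec]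
    rw [hy]
    exact (e.symm i).2.isOptimal_stdMatrix hz
  have hcover : ∀ z ∈ U, ∃ i, 0 ≤ (W i)⁻¹ *ᵥ b z := fun z hz => by
    obtain ⟨lb, hlb⟩ := hbdd z hz
    obtain ⟨g₀, hg₀, hv⟩ := exists_isDualFeasibleBasis_stdMatrix (hfeas z hz)
      ⟨lb, by rintro _ ⟨y, hy, rfl⟩; exact hlb y hy⟩
    exact ⟨e ⟨g₀, hg₀⟩, by simpa [W, g] using hv⟩
  refine ⟨_, W, y, fun i => (e.symm i).2.1, hcover, fun i z _ hz => hopt i z hz, ?_⟩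
  choose idx hidx using hcover
  refine ⟨fun z => if hz : z ∈ U then y (idx z hz) z else 0, fun z hz => ?_⟩
  simp only [dif_pos hz]
  exact ⟨⟨idx z hz, hidx z hz, rfl⟩, hopt _ _ (hidx z hz)⟩
end

section
/- A univariate function that is the pointwise maximum of finitely many affine functions of a single variable y_k, minimized over a closed interval [l, u] defined by finitely many affine lower and upper bounds, attains its minimum either at an endpoint of the interval or at an intersection point of two of the affine pieces; in all cases, the minimizer, viewed as a function of the parameters (the coefficients entering the affine pieces and bounds affinely), can be chosen piecewise linear in those parameters. -/
/-!
Every value of `y ↦ ⨆ i, a i * y + b i` on `[l, u]` is at least its value at some candidate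
point: take a piece `i` active at `y` and walk from `y` in the direction in which piece `i` does
not increase, to the nearest candidate (an endpoint or a crossing point of two pieces with
distinct slopes). No other piece can overtake piece `i` on the way, since by the intermediate
value theorem that would produce a crossing point strictly closer to `y`. Hence the best candidate
minimizes over `[l, u]`. When the intercepts and bounds depend affinely on a parameter `p`, every
candidate is the value at `p` of one of finitely many affine maps, so choosing the best candidate
for each `p` gives a piecewise linear minimizer.
-/

/-- A real-valued function of a parameter is piecewise linear if it is a
pointwise selection from finitely many affine functions. -/
def IsPWL {V : Type*} [AddCommGroup V] [Module ℝ V] (g : V → ℝ) : Prop :=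
  ∃ (N : ℕ) (A : Fin N → (V →ᵃ[ℝ] ℝ)), ∀ p, ∃ i, g p = A i p

open Set

section MaxAffine

variable {ι : Type*} (a b : ι → ℝ)

noncomputable def maxAffine (y : ℝ) : ℝ := ⨆ i, a i * y + b i

lemma le_maxAffine [Finite ι] (i : ι) (y : ℝ) : a i * y + b i ≤ maxAffine a b y :=
  le_ciSup (Finite.bddAbove_range fun i => a i * y + b i) i

lemma exists_maxAffine_eq [Finite ι] [Nonempty ι] (y : ℝ) :
    ∃ i, maxAffine a b y = a i * y + b i :=
  exists_eq_ciSup_of_finite.imp fun _ h => h.symm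

variable {a b}

lemma piece_le_of_forall_crossing_eq {i j : ι} {t y : ℝ}
    (hy : a j * y + b j ≤ a i * y + b i)
    (hcross : ∀ z ∈ uIcc t y, a i ≠ a j → a i * z + b i = a j * z + b j → z = t) :
    a j * t + b j ≤ a i * t + b i := by
  by_contra! ht
  have hslope : a i ≠ a j := by
    intro h
    rw [h] at hy ht
    linarith
  set f : ℝ → ℝ := fun z => (a i * z + b i) - (a j * z + b j)
  have hzero : (0 : ℝ) ∈ uIcc (f t) (f y) := mem_uIcc_of_le (by linarith) (by linarith)
  obtain ⟨z, hz, hfz⟩ := intermediate_value_uIcc (by fun_prop) hzero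
  have hzt : z = t := hcross z hz hslope (sub_eq_zero.1 hfz)
  rw [hzt] at hfz
  linarith [sub_eq_zero.1 hfz]

lemma maxAffine_le_of_forall_crossing_eq [Finite ι] {i : ι} {t y : ℝ}
    (hi : maxAffine a b y = a i * y + b i) (ht : a i * t ≤ a i * y)
    (hcross : ∀ j, ∀ z ∈ uIcc t y, a i ≠ a j → a i * z + b i = a j * z + b j → z = t) :
    maxAffine a b t ≤ maxAffine a b y := by
  have : Nonempty ι := ⟨i⟩
  calc maxAffine a b t ≤ a i * t + b i :=
        ciSup_le fun j => piece_le_of_forall_crossing_eq (hi ▸ le_maxAffine a b j y) (hcross j)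
    _ ≤ a i * y + b i := by linarith
    _ = maxAffine a b y := hi.symm

variable {l u : ℝ} {S : Set ℝ}

lemma exists_mem_maxAffine_le [Finite ι] [Nonempty ι] (hS : S.Finite) (hl : l ∈ S)
    (hu : u ∈ S)
    (hcross : ∀ z ∈ Icc l u, ∀ i j, a i ≠ a j → a i * z + b i = a j * z + b j → z ∈ S)
    {y : ℝ} (hy : y ∈ Icc l u) : ∃ t ∈ S, maxAffine a b t ≤ maxAffine a b y := by
  obtain ⟨i, hi⟩ := exists_maxAffine_eq a b y
  rcases le_or_gt 0 (a i) with hai | hai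
  · obtain ⟨t, ⟨htS, hty⟩, htmax⟩ :=
      (S ∩ Iic y).exists_max_image id (hS.inter_of_left _) ⟨l, hl, hy.1⟩
    refine ⟨t, htS,
      maxAffine_le_of_forall_crossing_eq hi (mul_le_mul_of_nonneg_left hty hai) ?_⟩
    intro j z hz hij hzij
    rw [uIcc_of_le hty] at hz
    have hlt : l ≤ t := htmax l ⟨hl, hy.1⟩
    have hzS := hcross z ⟨hlt.trans hz.1, hz.2.trans hy.2⟩ i j hij hzij
    exact le_antisymm (htmax z ⟨hzS, hz.2⟩) hz.1
  · obtain ⟨t, ⟨htS, hyt⟩, htmin⟩ :=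
      (S ∩ Ici y).exists_min_image id (hS.inter_of_left _) ⟨u, hu, hy.2⟩
    refine ⟨t, htS,
      maxAffine_le_of_forall_crossing_eq hi (mul_le_mul_of_nonpos_left hyt hai.le) ?_⟩
    intro j z hz hij hzij
    rw [uIcc_of_ge hyt] at hz
    have htu : t ≤ u := htmin u ⟨hu, hy.2⟩
    have hzS := hcross z ⟨hy.1.trans hz.1, hz.2.trans htu⟩ i j hij hzij
    exact le_antisymm hz.2 (htmin z ⟨hzS, hz.1⟩)

theorem exists_mem_isMinOn_maxAffine [Finite ι] [Nonempty ι] (hS : S.Finite) (hl : l ∈ S)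
    (hu : u ∈ S)
    (hcross : ∀ z ∈ Icc l u, ∀ i j, a i ≠ a j → a i * z + b i = a j * z + b j → z ∈ S) :
    ∃ y ∈ S, IsMinOn (maxAffine a b) (Icc l u) y := by
  obtain ⟨y, hyS, hymin⟩ := S.exists_min_image (maxAffine a b) hS ⟨l, hl⟩
  refine ⟨y, hyS, isMinOn_iff.2 fun y' hy' => ?_⟩
  obtain ⟨t, htS, ht⟩ := exists_mem_maxAffine_le hS hl hu hcross hy'
  exact (hymin t htS).trans ht

end MaxAffine

section Parametric

variable {V : Type*} [AddCommGroup V] [Module ℝ V]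

lemma isPWL_of_finite {g : V → ℝ} {s : Set (V →ᵃ[ℝ] ℝ)} (hs : s.Finite)
    (hg : ∀ p, ∃ A ∈ s, g p = A p) : IsPWL g := by
  have := hs.to_subtype
  obtain ⟨n, ⟨e⟩⟩ := Finite.exists_equiv_fin s
  refine ⟨n, fun k => e.symm k, fun p => ?_⟩
  obtain ⟨A, hA, hgA⟩ := hg p
  exact ⟨e ⟨A, hA⟩, by simpa using hgA⟩

variable {ι : Type*} (a : ι → ℝ) (b : ι → V →ᵃ[ℝ] ℝ)

-- The zero map when `a i = a j`; `candidateMaps` only uses it for distinct slopes.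
noncomputable def crossingMap (i j : ι) : V →ᵃ[ℝ] ℝ := (a i - a j)⁻¹ • (b j - b i)

lemma eq_crossingMap_iff {i j : ι} (hij : a i ≠ a j) (p : V) (z : ℝ) :
    z = crossingMap a b i j p ↔ a i * z + b i p = a j * z + b j p := by
  have hne : a i - a j ≠ 0 := sub_ne_zero.2 hij
  simp only [crossingMap, AffineMap.coe_smul, AffineMap.coe_sub, Pi.smul_apply, Pi.sub_apply,
    smul_eq_mul, ← div_eq_inv_mul, eq_div_iff hne]
  constructor <;> intro h <;> linarith

def candidateMaps (l u : V →ᵃ[ℝ] ℝ) : Set (V →ᵃ[ℝ] ℝ) :=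
  {l, u} ∪ {A | ∃ i j, a i ≠ a j ∧ crossingMap a b i j = A}

variable {a b}

lemma finite_candidateMaps [Finite ι] (l u : V →ᵃ[ℝ] ℝ) : (candidateMaps a b l u).Finite :=
  (toFinite {l, u}).union <| (finite_range fun ij : ι × ι => crossingMap a b ij.1 ij.2).subset
    fun _ ⟨i, j, _, hA⟩ => ⟨(i, j), hA⟩

lemma apply_eq_or_crossing_of_mem_candidateMaps {l u A : V →ᵃ[ℝ] ℝ}
    (hA : A ∈ candidateMaps a b l u) (p : V) :
    A p = l p ∨ A p = u p ∨ ∃ i j, a i ≠ a j ∧ a i * A p + b i p = a j * A p + b j p := by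
  rcases hA with (rfl | rfl) | ⟨i, j, hij, rfl⟩
  · exact Or.inl rfl
  · exact Or.inr (Or.inl rfl)
  · exact Or.inr (Or.inr ⟨i, j, hij, (eq_crossingMap_iff a b hij p _).1 rfl⟩)

variable (a b) in
theorem exists_mem_candidateMaps_isMinOn [Finite ι] [Nonempty ι] (l u : V →ᵃ[ℝ] ℝ) {p : V}
    (hp : l p ≤ u p) :
    ∃ A ∈ candidateMaps a b l u, A p ∈ Icc (l p) (u p) ∧
      IsMinOn (maxAffine a (b · p)) (Icc (l p) (u p)) (A p) := by
  set S := (fun A : V →ᵃ[ℝ] ℝ => A p) '' candidateMaps a b l u ∩ Icc (l p) (u p)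
  have hS : S.Finite := ((finite_candidateMaps l u).image _).inter_of_left _
  have hl : l p ∈ S := ⟨⟨l, Or.inl (Or.inl rfl), rfl⟩, left_mem_Icc.2 hp⟩
  have hu : u p ∈ S := ⟨⟨u, Or.inl (Or.inr rfl), rfl⟩, right_mem_Icc.2 hp⟩
  have hcross : ∀ z ∈ Icc (l p) (u p), ∀ i j, a i ≠ a j →
      a i * z + b i p = a j * z + b j p → z ∈ S := fun z hz i j hij hzij =>
    ⟨⟨crossingMap a b i j, Or.inr ⟨i, j, hij, rfl⟩,
      ((eq_crossingMap_iff a b hij p z).2 hzij).symm⟩, hz⟩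
  obtain ⟨_, ⟨⟨A, hA, rfl⟩, hAp⟩, hmin⟩ := exists_mem_isMinOn_maxAffine hS hl hu hcross
  exact ⟨A, hA, hAp, hmin⟩

end Parametric

/-- The pointwise maximum of finitely many affine functions of a single
variable, minimized over a closed interval `[l, u]`, attains its minimum at an
endpoint or at an intersection of two pieces with distinct slopes; moreover,
when the intercepts of the pieces and the bounds depend affinely on a
parameter `p`, the minimizer can be chosen piecewise linear in `p`. -/
theorem stmt9 {V : Type*} [AddCommGroup V] [Module ℝ V]
    (N : ℕ) (hN : 0 < N) (a : Fin N → ℝ)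
    (bf : Fin N → (V →ᵃ[ℝ] ℝ)) (lf uf : V →ᵃ[ℝ] ℝ) :
    (∀ p : V, lf p ≤ uf p →
      ∃ y ∈ Set.Icc (lf p) (uf p),
        (∀ y' ∈ Set.Icc (lf p) (uf p),
          (⨆ i, a i * y + bf i p) ≤ (⨆ i, a i * y' + bf i p)) ∧
        (y = lf p ∨ y = uf p ∨
          ∃ i j, a i ≠ a j ∧ a i * y + bf i p = a j * y + bf j p)) ∧
    ∃ g : V → ℝ, IsPWL g ∧ ∀ p : V, lf p ≤ uf p →
      g p ∈ Set.Icc (lf p) (uf p) ∧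
      ∀ y' ∈ Set.Icc (lf p) (uf p),
        (⨆ i, a i * g p + bf i p) ≤ (⨆ i, a i * y' + bf i p) := by
  have : Nonempty (Fin N) := ⟨⟨0, hN⟩⟩
  have hbest : ∀ p, ∃ A ∈ candidateMaps a bf lf uf, lf p ≤ uf p →
      A p ∈ Icc (lf p) (uf p) ∧ IsMinOn (maxAffine a (bf · p)) (Icc (lf p) (uf p)) (A p) := by
    intro p
    by_cases hp : lf p ≤ uf p
    · obtain ⟨A, hA, hAp⟩ := exists_mem_candidateMaps_isMinOn a bf lf uf hp
      exact ⟨A, hA, fun _ => hAp⟩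
    · exact ⟨lf, Or.inl (Or.inl rfl), fun h => absurd h hp⟩
  choose A hA hAmin using hbest
  refine ⟨fun p hp => ?_, fun p => A p p, ?_, fun p hp => ?_⟩
  · exact ⟨A p p, (hAmin p hp).1, isMinOn_iff.1 (hAmin p hp).2,
      apply_eq_or_crossing_of_mem_candidateMaps (hA p) p⟩
  · exact isPWL_of_finite (finite_candidateMaps lf uf) fun p => ⟨A p, hA p, rfl⟩
  · exact ⟨(hAmin p hp).1, isMinOn_iff.1 (hAmin p hp).2⟩
end

section
/- Let x̃ be adaptively robust feasible for the two-stage robust LP P with objective c(z)ᵀx + dᵀy(z), and let ỹ(·) be a decision rule such that (x̃, ỹ(·)) is adaptively robustly optimal. Consider the optimization problem Q: max over (z, y) of dᵀỹ(z) − dᵀy subject to z ∈ U and A(z)x̃ + B y ≤ r(z). If the optimal value of Q is zero, then ỹ(·) is a Pareto-dominant (PARO) extension of x̃, i.e., there is no other adaptively robustly optimal pair (x̃, ȳ(·)) with c(z)ᵀx̃ + dᵀȳ(z) ≤ c(z)ᵀx̃ + dᵀỹ(z) for all z ∈ U and strict inequality for some z ∈ U. -/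
open Matrix

section

variable {nx ny m L : ℕ}

/-- Feasibility of `(x, y(·))` for the two-stage robust LP. -/
def TwoStageFeasible (A : (Fin L → ℝ) → Matrix (Fin m) (Fin nx) ℝ)
    (B : Matrix (Fin m) (Fin ny) ℝ) (r : (Fin L → ℝ) → (Fin m → ℝ))
    (U : Set (Fin L → ℝ)) (x : Fin nx → ℝ) (y : (Fin L → ℝ) → (Fin ny → ℝ)) : Prop :=
  ∀ z ∈ U, ∀ i, (A z).mulVec x i + B.mulVec (y z) i ≤ r z i

/-- Scenario-wise objective `c(z)ᵀx + dᵀy(z)`. -/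
def TwoStageObj (c : (Fin L → ℝ) → (Fin nx → ℝ)) (d : Fin ny → ℝ)
    (x : Fin nx → ℝ) (y : (Fin L → ℝ) → (Fin ny → ℝ)) (z : Fin L → ℝ) : ℝ :=
  c z ⬝ᵥ x + d ⬝ᵥ y z

/-- `(x, y(·))` is adaptively robustly optimal. -/
def IsARO (c : (Fin L → ℝ) → (Fin nx → ℝ)) (d : Fin ny → ℝ)
    (A : (Fin L → ℝ) → Matrix (Fin m) (Fin nx) ℝ) (B : Matrix (Fin m) (Fin ny) ℝ)
    (r : (Fin L → ℝ) → (Fin m → ℝ)) (U : Set (Fin L → ℝ))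
    (x : Fin nx → ℝ) (y : (Fin L → ℝ) → (Fin ny → ℝ)) : Prop :=
  TwoStageFeasible A B r U x y ∧
    ∀ x' y', TwoStageFeasible A B r U x' y' →
      (⨆ z : U, TwoStageObj c d x y z) ≤ (⨆ z : U, TwoStageObj c d x' y' z)

theorem TwoStageObj_le_of_feasible
    (c : (Fin L → ℝ) → (Fin nx → ℝ)) (d : Fin ny → ℝ)
    {A : (Fin L → ℝ) → Matrix (Fin m) (Fin nx) ℝ} {B : Matrix (Fin m) (Fin ny) ℝ}
    {r : (Fin L → ℝ) → (Fin m → ℝ)} {U : Set (Fin L → ℝ)}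
    {x : Fin nx → ℝ} {yt y : (Fin L → ℝ) → (Fin ny → ℝ)}
    (hQ : ∀ z ∈ U, ∀ y : Fin ny → ℝ,
      (∀ i, (A z).mulVec x i + B.mulVec y i ≤ r z i) →
        d ⬝ᵥ yt z - d ⬝ᵥ y ≤ 0)
    (hy : TwoStageFeasible A B r U x y) {z : Fin L → ℝ} (hz : z ∈ U) :
    TwoStageObj c d x yt z ≤ TwoStageObj c d x y z := by
  have hQz := hQ z hz (y z) (hy z hz)
  simp only [TwoStageObj]
  linarith

theorem stmt14_general
    (c : (Fin L → ℝ) → (Fin nx → ℝ)) (d : Fin ny → ℝ)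
    (A : (Fin L → ℝ) → Matrix (Fin m) (Fin nx) ℝ) (B : Matrix (Fin m) (Fin ny) ℝ)
    (r : (Fin L → ℝ) → (Fin m → ℝ)) (U : Set (Fin L → ℝ))
    (xt : Fin nx → ℝ) (yt : (Fin L → ℝ) → (Fin ny → ℝ))
    (hQ : ∀ z ∈ U, ∀ y : Fin ny → ℝ,
      (∀ i, (A z).mulVec xt i + B.mulVec y i ≤ r z i) →
        d ⬝ᵥ yt z - d ⬝ᵥ y ≤ 0) :
    ¬ ∃ ybar : (Fin L → ℝ) → (Fin ny → ℝ), IsARO c d A B r U xt ybar ∧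
      (∀ z ∈ U, TwoStageObj c d xt ybar z ≤ TwoStageObj c d xt yt z) ∧
      ∃ z ∈ U, TwoStageObj c d xt ybar z < TwoStageObj c d xt yt z := by
  rintro ⟨ybar, hbARO, -, z, hz, hlt⟩
  exact (TwoStageObj_le_of_feasible c d hQ hbARO.1 hz).not_gt hlt

/-- If `(x̃, ỹ(·))` is ARO and the auxiliary problem
`max { dᵀỹ(z) − dᵀy : z ∈ U, A(z)x̃ + By ≤ r(z) }` has optimal value zero
(i.e. all its feasible values are `≤ 0`), then `ỹ(·)` is a PARO extension of
`x̃`: no ARO rule `ȳ(·)` for `x̃` weakly improves the objective everywhere on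
`U` and strictly somewhere. -/
theorem stmt14
    (c : (Fin L → ℝ) → (Fin nx → ℝ)) (d : Fin ny → ℝ)
    (A : (Fin L → ℝ) → Matrix (Fin m) (Fin nx) ℝ) (B : Matrix (Fin m) (Fin ny) ℝ)
    (r : (Fin L → ℝ) → (Fin m → ℝ)) (U : Set (Fin L → ℝ))
    (xt : Fin nx → ℝ) (yt : (Fin L → ℝ) → (Fin ny → ℝ))
    (hARO : IsARO c d A B r U xt yt)
    (hQ : ∀ z ∈ U, ∀ y : Fin ny → ℝ,
      (∀ i, (A z).mulVec xt i + B.mulVec y i ≤ r z i) →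
        d ⬝ᵥ yt z - d ⬝ᵥ y ≤ 0) :
    ¬ ∃ ybar : (Fin L → ℝ) → (Fin ny → ℝ), IsARO c d A B r U xt ybar ∧
      (∀ z ∈ U, TwoStageObj c d xt ybar z ≤ TwoStageObj c d xt yt z) ∧
      ∃ z ∈ U, TwoStageObj c d xt ybar z < TwoStageObj c d xt yt z :=
  stmt14_general c d A B r U xt yt hQ

end
end

section
/- In the setting of the previous problem Q (with x̃ adaptively robust feasible and (x̃, ỹ(·)) adaptively robustly optimal), if the optimal value v* of Q is strictly positive, attained at (z*, y*), then the modified decision rule y(z) = ỹ(z) for z ≠ z* and y(z*) = y* is feasible with x̃ and Pareto-dominates ỹ(·); hence ỹ(·) is not a PARO extension of x̃. Moreover, v* bounds the maximum possible pointwise improvement: there is no z̄ ∈ U and feasible recourse ȳ (i.e., A(z̄)x̃ + B ȳ ≤ r(z̄)) with dᵀỹ(z̄) − dᵀȳ > v*. -/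
open Matrix

section

variable {nx ny m L : ℕ}

/-- `y(·)` is a PARO extension of `x`: `(x, y(·))` is ARO and no other ARO rule
for `x` weakly improves the objective on all of `U` and strictly somewhere. -/
def IsPAROExtension (c : (Fin L → ℝ) → (Fin nx → ℝ)) (d : Fin ny → ℝ)
    (A : (Fin L → ℝ) → Matrix (Fin m) (Fin nx) ℝ) (B : Matrix (Fin m) (Fin ny) ℝ)
    (r : (Fin L → ℝ) → (Fin m → ℝ)) (U : Set (Fin L → ℝ))
    (x : Fin nx → ℝ) (y : (Fin L → ℝ) → (Fin ny → ℝ)) : Prop :=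
  IsARO c d A B r U x y ∧
    ¬ ∃ ybar : (Fin L → ℝ) → (Fin ny → ℝ), IsARO c d A B r U x ybar ∧
      (∀ z ∈ U, TwoStageObj c d x ybar z ≤ TwoStageObj c d x y z) ∧
      ∃ z ∈ U, TwoStageObj c d x ybar z < TwoStageObj c d x y z

/-! Changing `ỹ` at the single scenario `z⋆` to the recourse `y⋆` keeps feasibility and
lowers the objective there by `v⋆ > 0`, leaving it unchanged elsewhere. Since the worst-case
objective can only decrease (and stays bounded exactly when the old one was), the new rule is
still adaptively robustly optimal, so it Pareto-dominates `ỹ`. The bound on improvements is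
just the optimality of `v⋆` in `Q`. -/

lemma Real.iSup_mono_of_bddAbove_imp {ι : Type*} {f g : ι → ℝ} (hfg : ∀ i, f i ≤ g i)
    (hbdd : BddAbove (Set.range f) → BddAbove (Set.range g)) : ⨆ i, f i ≤ ⨆ i, g i := by
  by_cases hg : BddAbove (Set.range g)
  · exact ciSup_mono hg hfg
  · rw [Real.iSup_of_not_bddAbove hg, Real.iSup_of_not_bddAbove (mt hbdd hg)]

lemma bddAbove_range_of_eq_of_ne {ι α : Type*} [Preorder α] [IsDirectedOrder α] {f g : ι → α}
    (i₀ : ι) (hfg : ∀ i, i ≠ i₀ → g i = f i) (hf : BddAbove (Set.range f)) :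
    BddAbove (Set.range g) := by
  refine (hf.insert (g i₀)).mono ?_
  rintro _ ⟨i, rfl⟩
  by_cases hi : i = i₀
  · exact hi ▸ Set.mem_insert _ _
  · exact Set.mem_insert_of_mem _ ⟨i, (hfg i hi).symm⟩

section TwoStage

variable {A : (Fin L → ℝ) → Matrix (Fin m) (Fin nx) ℝ} {B : Matrix (Fin m) (Fin ny) ℝ}
  {r : (Fin L → ℝ) → (Fin m → ℝ)} {U : Set (Fin L → ℝ)} {c : (Fin L → ℝ) → (Fin nx → ℝ)}
  {d : Fin ny → ℝ} {x : Fin nx → ℝ} {y y' : (Fin L → ℝ) → (Fin ny → ℝ)}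
  {z₀ : Fin L → ℝ} {y₀ : Fin ny → ℝ}

lemma TwoStageFeasible.update (hy : TwoStageFeasible A B r U x y)
    (hy₀ : ∀ i, (A z₀).mulVec x i + B.mulVec y₀ i ≤ r z₀ i) :
    TwoStageFeasible A B r U x (Function.update y z₀ y₀) := by
  intro z hz
  rcases eq_or_ne z z₀ with rfl | hne
  · simpa only [Function.update_self] using hy₀
  · simpa only [Function.update_of_ne hne] using hy z hz

lemma twoStageObj_update_self :
    TwoStageObj c d x (Function.update y z₀ y₀) z₀ = c z₀ ⬝ᵥ x + d ⬝ᵥ y₀ := by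
  rw [TwoStageObj, Function.update_self]

lemma twoStageObj_update_of_ne {z : Fin L → ℝ} (hne : z ≠ z₀) :
    TwoStageObj c d x (Function.update y z₀ y₀) z = TwoStageObj c d x y z := by
  rw [TwoStageObj, TwoStageObj, Function.update_of_ne hne]

lemma twoStageObj_update_le (hy₀ : d ⬝ᵥ y₀ ≤ d ⬝ᵥ y z₀) (z : Fin L → ℝ) :
    TwoStageObj c d x (Function.update y z₀ y₀) z ≤ TwoStageObj c d x y z := by
  rcases eq_or_ne z z₀ with rfl | hne
  · rw [twoStageObj_update_self, TwoStageObj]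
    linarith
  · exact (twoStageObj_update_of_ne hne).le

lemma twoStageObj_update_lt (hy₀ : d ⬝ᵥ y₀ < d ⬝ᵥ y z₀) :
    TwoStageObj c d x (Function.update y z₀ y₀) z₀ < TwoStageObj c d x y z₀ := by
  rw [twoStageObj_update_self, TwoStageObj]
  linarith

/- `⨆` over `ℝ` is `0` on unbounded families, hence `hbdd`: without it a bounded `y'`
could have a larger worst case than an unbounded `y`. -/
lemma IsARO.of_le (hy : IsARO c d A B r U x y) (hy' : TwoStageFeasible A B r U x y')
    (hle : ∀ z ∈ U, TwoStageObj c d x y' z ≤ TwoStageObj c d x y z)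
    (hbdd : BddAbove (Set.range fun z : U => TwoStageObj c d x y' z) →
      BddAbove (Set.range fun z : U => TwoStageObj c d x y z)) :
    IsARO c d A B r U x y' :=
  ⟨hy', fun x'' y'' hfeas =>
    (Real.iSup_mono_of_bddAbove_imp (fun z : U => hle z z.2) hbdd).trans (hy.2 x'' y'' hfeas)⟩

lemma IsARO.update (hy : IsARO c d A B r U x y) (hz₀ : z₀ ∈ U)
    (hfeas₀ : ∀ i, (A z₀).mulVec x i + B.mulVec y₀ i ≤ r z₀ i) (hy₀ : d ⬝ᵥ y₀ ≤ d ⬝ᵥ y z₀) :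
    IsARO c d A B r U x (Function.update y z₀ y₀) :=
  hy.of_le (hy.1.update hfeas₀) (fun z _ => twoStageObj_update_le hy₀ z)
    (bddAbove_range_of_eq_of_ne ⟨z₀, hz₀⟩ fun _ hne =>
      (twoStageObj_update_of_ne (Subtype.coe_ne_coe.mpr hne)).symm)

lemma not_isPAROExtension_of_dominated (hy' : IsARO c d A B r U x y')
    (hle : ∀ z ∈ U, TwoStageObj c d x y' z ≤ TwoStageObj c d x y z)
    (hlt : ∃ z ∈ U, TwoStageObj c d x y' z < TwoStageObj c d x y z) :
    ¬ IsPAROExtension c d A B r U x y :=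
  fun hP => hP.2 ⟨y', hy', hle, hlt⟩

end TwoStage

/-- If the auxiliary problem `Q` has a strictly positive optimal value `v⋆`
attained at `(z⋆, y⋆)`, then the rule obtained from `ỹ(·)` by replacing its
value at `z⋆` by `y⋆` is feasible with `x̃` and Pareto-dominates `ỹ(·)`; hence
`ỹ(·)` is not a PARO extension of `x̃`.  Moreover no scenario `z̄ ∈ U` with
feasible recourse `ȳ` improves `dᵀỹ(z̄)` by more than `v⋆`. -/
theorem stmt15
    (c : (Fin L → ℝ) → (Fin nx → ℝ)) (d : Fin ny → ℝ)
    (A : (Fin L → ℝ) → Matrix (Fin m) (Fin nx) ℝ) (B : Matrix (Fin m) (Fin ny) ℝ)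
    (r : (Fin L → ℝ) → (Fin m → ℝ)) (U : Set (Fin L → ℝ))
    (xt : Fin nx → ℝ) (yt : (Fin L → ℝ) → (Fin ny → ℝ))
    (hARO : IsARO c d A B r U xt yt)
    (vstar : ℝ) (hv : 0 < vstar)
    (zstar : Fin L → ℝ) (hzstar : zstar ∈ U) (ystar : Fin ny → ℝ)
    (hyfeas : ∀ i, (A zstar).mulVec xt i + B.mulVec ystar i ≤ r zstar i)
    (hattain : d ⬝ᵥ yt zstar - d ⬝ᵥ ystar = vstar)
    (hopt : ∀ z ∈ U, ∀ y : Fin ny → ℝ,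
      (∀ i, (A z).mulVec xt i + B.mulVec y i ≤ r z i) →
        d ⬝ᵥ yt z - d ⬝ᵥ y ≤ vstar) :
    (TwoStageFeasible A B r U xt (Function.update yt zstar ystar) ∧
      (∀ z ∈ U, TwoStageObj c d xt (Function.update yt zstar ystar) z ≤
        TwoStageObj c d xt yt z) ∧
      ∃ z ∈ U, TwoStageObj c d xt (Function.update yt zstar ystar) z <
        TwoStageObj c d xt yt z) ∧
    ¬ IsPAROExtension c d A B r U xt yt ∧
    ¬ ∃ zbar ∈ U, ∃ ybar : Fin ny → ℝ,
      (∀ i, (A zbar).mulVec xt i + B.mulVec ybar i ≤ r zbar i) ∧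
      vstar < d ⬝ᵥ yt zbar - d ⬝ᵥ ybar := by
  have himprove : d ⬝ᵥ ystar < d ⬝ᵥ yt zstar := by linarith
  have hle : ∀ z ∈ U, TwoStageObj c d xt (Function.update yt zstar ystar) z ≤
      TwoStageObj c d xt yt z := fun z _ => twoStageObj_update_le himprove.le z
  have hlt := twoStageObj_update_lt (c := c) (x := xt) himprove
  refine ⟨⟨hARO.1.update hyfeas, hle, zstar, hzstar, hlt⟩, ?_, ?_⟩
  · exact not_isPAROExtension_of_dominated (hARO.update hzstar hyfeas himprove.le) hle
      ⟨zstar, hzstar, hlt⟩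
  · rintro ⟨zbar, hzbar, ybar, hfeas, hgt⟩
    exact (hopt zbar hzbar ybar hfeas).not_gt hgt

end
end
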